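/- Adopt the Grid setup and let M > 0 and ε > 0. There is an absolute constant K₀ (independent of a, b, K, K', M, ε, and the parameters) such that if K' ≥ max{12LM/(5ε), 30·log(12LMK/ε), K₀}, then for every j ∈ {1,…,K} and l ∈ {1,…,K'}, ∫_a^b |π_{jl}(x) − 1_{(a_{jl}, a_{j(l+1)}]}(x)| dx < ε/(3M). -/

import Mathlib

open MeasureTheory

noncomputable section

/-- Width `L = (b-a)/K` of the coarse grid. -/
def gL (a b : ℝ) (K : ℕ) : ℝ := (b - a) / K

/-- Left endpoint `a_{jl} = a + (j-1)L + (l-1)L/K'` of the `(j,l)`-th subinterval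
(0-indexed: `j : Fin K`, `l : Fin K'`). -/
def gA (a b : ℝ) (K K' : ℕ) (j : Fin K) (l : Fin K') : ℝ :=
  a + (j : ℕ) * gL a b K + (l : ℕ) * gL a b K / K'

/-- Midpoint `c_{jl}` of the `(j,l)`-th subinterval. -/
def gC (a b : ℝ) (K K' : ℕ) (j : Fin K) (l : Fin K') : ℝ :=
  gA a b K K' j l + gL a b K / (2 * K')

/-- The Gaussian softmax weight `π_{jl}(x)`. -/
def gPi (a b : ℝ) (K K' : ℕ) (μ : Fin K → Fin K' → ℝ) (σ2 : ℝ)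
    (j : Fin K) (l : Fin K') (x : ℝ) : ℝ :=
  Real.exp (-(x - μ j l) ^ 2 / (2 * σ2)) /
    ∑ t : Fin K, ∑ s : Fin K', Real.exp (-(x - μ t s) ^ 2 / (2 * σ2))

end


/-!
Number the `K K'` subintervals as one grid of `N = K K'` cells of width `h = L/K'`, cell
`(j, l)` becoming cell `n = j K' + l` (`finProdFinEquiv`); the mean of cell `n` lies within `h/6`
of its centre `a + n h + h/2`, and `σ² K' ≤ h²`.

Since `(x - m')² - (x - m)² = (m' - m)(m + m' - 2x)`, for `x` in cell `k` the Gaussian of the mean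
of another cell `n`, divided by the Gaussian of the mean of cell `k`, is at most `exp (-K'/90)`
when the cells are adjacent and `x` is `11h/60` away from their common endpoint, and at most
`exp (-5K'/9)` in every other case. Hence `|π_i - 1_{cell i}|` is at most `1` on the two strips of
half-width `11h/60` around the endpoints of cell `i`, at most `2 exp (-K'/90) + N exp (-5K'/9)`
elsewhere on cell `i` and its two neighbours, and at most `exp (-5K'/9)` on the rest of `(a, b]`.
Integrating, the strips contribute `11h/15 ≤ (11/12) ε/(3M)` because `K' ≥ 12LM/(5ε)`, and the
remaining terms are negligible: the one of total length `b - a = N h` because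
`K' ≥ 30 log (12LMK/ε)`, the others because `K' ≥ K₀`.
-/

open Real Set

noncomputable section

def gaussKernel (σ2 m x : ℝ) : ℝ := exp (-(x - m) ^ 2 / (2 * σ2))

def softmaxWeight {ι : Type*} [Fintype ι] (σ2 : ℝ) (m : ι → ℝ) (i : ι) (x : ℝ) : ℝ :=
  gaussKernel σ2 (m i) x / ∑ k, gaussKernel σ2 (m k) x

def gridCell (a h : ℝ) (n : ℕ) : Set ℝ := Ioc (a + n * h) (a + n * h + h)

/-- The half-width `11h/60` exceeds the tolerance `h/6` of the means, which gives neighbouring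
cells the decay rate `κ/90`, while the total length `11h/15` stays below the `4h/5` that the
final estimate can afford. -/
def cellBoundaryStrip (a h : ℝ) (i : ℕ) : Set ℝ :=
  Icc (a + i * h - 11 * h / 60) (a + i * h + 11 * h / 60) ∪
    Icc (a + i * h + h - 11 * h / 60) (a + i * h + h + 11 * h / 60)

def gridCellNbhd (a h : ℝ) (i : ℕ) : Set ℝ := Ioc (a + i * h - h) (a + i * h + 2 * h)

def cellRatioBound (κ : ℝ) (n k : ℕ) : ℝ :=
  if n = k + 1 ∨ k = n + 1 then exp (-(κ / 90)) else exp (-(5 * κ / 9))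

end

section PositiveWeights

variable {ι : Type*} [Fintype ι] {f : ι → ℝ}

theorem div_sum_nonneg (hf : ∀ k, 0 < f k) (i : ι) : 0 ≤ f i / ∑ k, f k :=
  div_nonneg (hf i).le (Finset.sum_nonneg fun k _ => (hf k).le)

theorem div_sum_le_div (hf : ∀ k, 0 < f k) (i k : ι) : f i / ∑ k, f k ≤ f i / f k :=
  div_le_div_of_nonneg_left (hf i).le (hf k)
    (Finset.single_le_sum (fun k _ => (hf k).le) (Finset.mem_univ k))

theorem div_sum_le_one (hf : ∀ k, 0 < f k) (i : ι) : f i / ∑ k, f k ≤ 1 :=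
  (div_sum_le_div hf i i).trans (div_self (hf i).ne').le

theorem one_sub_div_sum_le [DecidableEq ι] (hf : ∀ k, 0 < f k) (i : ι) :
    1 - f i / ∑ k, f k ≤ ∑ k ∈ Finset.univ.erase i, f k / f i := by
  have hsum : 0 < ∑ k, f k := Finset.sum_pos (fun k _ => hf k) ⟨i, Finset.mem_univ i⟩
  rw [← Finset.sum_div, one_sub_div hsum.ne', ← Finset.sum_erase_add _ _ (Finset.mem_univ i),
    add_sub_cancel_right]
  exact div_le_div_of_nonneg_left (Finset.sum_nonneg fun k _ => (hf k).le) (hf i)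
    (Finset.single_le_sum (fun k _ => (hf k).le) (Finset.mem_univ i) |>.trans_eq
      (Finset.sum_erase_add _ _ (Finset.mem_univ i)).symm)

end PositiveWeights

section GaussKernel

theorem gaussKernel_pos (σ2 m x : ℝ) : 0 < gaussKernel σ2 m x := exp_pos _

theorem gaussKernel_neg (σ2 m x : ℝ) : gaussKernel σ2 (-m) (-x) = gaussKernel σ2 m x := by
  simp only [gaussKernel, show -x - -m = -(x - m) by ring, neg_sq]

theorem gaussKernel_div_le_exp {σ2 κ h c x m m' : ℝ} (hσ : 0 < σ2) (hκ : σ2 * κ ≤ h ^ 2)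
    (hc : 0 ≤ c) (hgap : 2 * c * h ^ 2 ≤ (x - m') ^ 2 - (x - m) ^ 2) :
    gaussKernel σ2 m' x / gaussKernel σ2 m x ≤ exp (-(c * κ)) := by
  rw [gaussKernel, gaussKernel, ← exp_sub, exp_le_exp, div_sub_div_same,
    div_le_iff₀ (by positivity)]
  nlinarith [mul_le_mul_of_nonneg_left hκ hc]

end GaussKernel

section CellComparison

variable {σ2 κ h x m m' γ : ℝ}

theorem le_sq_sub_sq {γ' : ℝ} (hm : |m - γ| ≤ h / 6) (hm' : |m' - γ'| ≤ h / 6)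
    (hsep : h / 3 ≤ γ' - γ) (hx : 2 * x + h / 3 ≤ γ + γ') :
    (γ' - γ - h / 3) * (γ + γ' - h / 3 - 2 * x) ≤ (x - m') ^ 2 - (x - m) ^ 2 := by
  have h1 := abs_le.1 hm
  have h2 := abs_le.1 hm'
  calc (γ' - γ - h / 3) * (γ + γ' - h / 3 - 2 * x)
      ≤ (m' - m) * (m + m' - 2 * x) :=
        mul_le_mul (by linarith) (by linarith) (by linarith) (by linarith)
    _ = (x - m') ^ 2 - (x - m) ^ 2 := by ring

theorem gaussKernel_div_le_of_adjacent_right (hh : 0 ≤ h) (hσ : 0 < σ2)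
    (hκ : σ2 * κ ≤ h ^ 2) (hm : |m - γ| ≤ h / 6) (hm' : |m' - (γ + h)| ≤ h / 6)
    (hx : x ≤ γ + h / 2 - 11 * h / 60) :
    gaussKernel σ2 m' x / gaussKernel σ2 m x ≤ exp (-(κ / 90)) := by
  have hgap := le_sq_sub_sq (x := x) hm hm' (by linarith) (by linarith)
  refine (gaussKernel_div_le_exp (c := 1 / 90) hσ hκ (by norm_num) ?_).trans_eq (by ring_nf)
  nlinarith

theorem gaussKernel_div_le_of_distant_right {γ' : ℝ} (hh : 0 ≤ h) (hσ : 0 < σ2)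
    (hκ : σ2 * κ ≤ h ^ 2) (hm : |m - γ| ≤ h / 6) (hm' : |m' - γ'| ≤ h / 6)
    (hγ' : γ + 2 * h ≤ γ') (hx : x ≤ γ + h / 2) :
    gaussKernel σ2 m' x / gaussKernel σ2 m x ≤ exp (-(5 * κ / 9)) := by
  have hgap := le_sq_sub_sq (x := x) hm hm' (by linarith) (by linarith)
  refine (gaussKernel_div_le_exp (c := 5 / 9) hσ hκ (by norm_num) ?_).trans_eq (by ring_nf)
  nlinarith [mul_le_mul (show 5 * h / 3 ≤ γ' - γ - h / 3 by linarith)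
      (show 2 * h / 3 ≤ γ + γ' - h / 3 - 2 * x by linarith) (by linarith) (by linarith)]

theorem gaussKernel_div_le_of_adjacent_left (hh : 0 ≤ h) (hσ : 0 < σ2)
    (hκ : σ2 * κ ≤ h ^ 2) (hm : |m - γ| ≤ h / 6) (hm' : |m' - (γ - h)| ≤ h / 6)
    (hx : γ - h / 2 + 11 * h / 60 ≤ x) :
    gaussKernel σ2 m' x / gaussKernel σ2 m x ≤ exp (-(κ / 90)) := by
  have hm'' : |-m' - (-γ + h)| ≤ h / 6 := by
    rwa [show -m' - (-γ + h) = -(m' - (γ - h)) by ring, abs_neg]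
  have hright := gaussKernel_div_le_of_adjacent_right (x := -x) (m := -m) (γ := -γ) hh hσ hκ
    (by rwa [neg_sub_neg, abs_sub_comm]) hm'' (by linarith)
  rwa [gaussKernel_neg, gaussKernel_neg] at hright

theorem gaussKernel_div_le_of_distant_left {γ' : ℝ} (hh : 0 ≤ h) (hσ : 0 < σ2)
    (hκ : σ2 * κ ≤ h ^ 2) (hm : |m - γ| ≤ h / 6) (hm' : |m' - γ'| ≤ h / 6)
    (hγ' : γ' ≤ γ - 2 * h) (hx : γ - h / 2 ≤ x) :
    gaussKernel σ2 m' x / gaussKernel σ2 m x ≤ exp (-(5 * κ / 9)) := by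
  have hright := gaussKernel_div_le_of_distant_right (x := -x) (m := -m) (m' := -m')
    (γ := -γ) (γ' := -γ') hh hσ hκ (by rwa [neg_sub_neg, abs_sub_comm])
    (by rwa [neg_sub_neg, abs_sub_comm]) (by linarith) (by linarith)
  rwa [gaussKernel_neg, gaussKernel_neg] at hright

end CellComparison

section Grid

variable {N : ℕ} {a h σ2 κ x : ℝ} {m : Fin N → ℝ}

theorem exists_mem_gridCell (hh : 0 < h) (hx : x ∈ Ioc a (a + N * h)) :
    ∃ k : Fin N, x ∈ gridCell a h k := by
  set y := (x - a) / h
  have hy : 0 < y := div_pos (by linarith [hx.1]) hh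
  have hyN : y ≤ N := (div_le_iff₀ hh).2 (by linarith [hx.2])
  have hceil : 0 < ⌈y⌉₊ := Nat.ceil_pos.2 hy
  refine ⟨⟨⌈y⌉₊ - 1, by have := Nat.ceil_le.2 hyN; omega⟩, ?_⟩
  have hcast : ((⌈y⌉₊ - 1 : ℕ) : ℝ) = ⌈y⌉₊ - 1 := by rw [Nat.cast_sub hceil, Nat.cast_one]
  have hlo : (⌈y⌉₊ : ℝ) - 1 < y := by linarith [Nat.ceil_lt_add_one hy.le]
  have hhi : y ≤ ⌈y⌉₊ := Nat.le_ceil y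
  simp only [gridCell, mem_Ioc, hcast]
  constructor
  · nlinarith [(lt_div_iff₀ hh).1 hlo]
  · nlinarith [(div_le_iff₀ hh).1 hhi]

theorem eq_of_mem_gridCell (hh : 0 < h) {k n : ℕ} (hk : x ∈ gridCell a h k)
    (hn : x ∈ gridCell a h n) : k = n := by
  have hkn : (k : ℝ) < n + 1 := by
    by_contra! hc; nlinarith [hk.1, hn.2]
  have hnk : (n : ℝ) < k + 1 := by
    by_contra! hc; nlinarith [hk.2, hn.1]
  have : k < n + 1 := by exact_mod_cast hkn
  have : n < k + 1 := by exact_mod_cast hnk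
  omega

theorem gaussKernel_div_le_cellRatioBound (hh : 0 < h) (hσ : 0 < σ2) (hκ : σ2 * κ ≤ h ^ 2)
    (hm : ∀ n, |m n - (a + n * h + h / 2)| ≤ h / 6) {k n : Fin N} (hnk : n ≠ k)
    (hx : x ∈ Icc (a + k * h) (a + k * h + h))
    (hleft : (k : ℕ) = n + 1 → a + k * h + 11 * h / 60 ≤ x)
    (hright : (n : ℕ) = k + 1 → x ≤ a + k * h + h - 11 * h / 60) :
    gaussKernel σ2 (m n) x / gaussKernel σ2 (m k) x ≤ cellRatioBound κ n k := by
  have hnk' : (n : ℕ) ≠ k := fun e => hnk (Fin.ext e)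
  rcases Nat.lt_or_gt_of_ne hnk' with hlt | hgt
  · by_cases hadj : (k : ℕ) = n + 1
    · have hcast : (n : ℝ) = k - 1 := by rw [hadj]; push_cast; ring
      rw [cellRatioBound, if_pos (Or.inr hadj)]
      refine gaussKernel_div_le_of_adjacent_left hh.le hσ hκ (hm k) ?_ (by linarith [hleft hadj])
      convert hm n using 3; rw [hcast]; ring
    · have hcast : (n : ℝ) + 2 ≤ k := by exact_mod_cast (show (n : ℕ) + 2 ≤ k by omega)
      rw [cellRatioBound, if_neg (by omega)]
      exact gaussKernel_div_le_of_distant_left hh.le hσ hκ (hm k) (hm n) (by nlinarith)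
        (by linarith [hx.1])
  · by_cases hadj : (n : ℕ) = k + 1
    · have hcast : (n : ℝ) = k + 1 := by rw [hadj]; push_cast; ring
      rw [cellRatioBound, if_pos (Or.inl hadj)]
      refine gaussKernel_div_le_of_adjacent_right hh.le hσ hκ (hm k) ?_ (by linarith [hright hadj])
      convert hm n using 3; rw [hcast]; ring
    · have hcast : (k : ℝ) + 2 ≤ n := by exact_mod_cast (show (k : ℕ) + 2 ≤ n by omega)
      rw [cellRatioBound, if_neg (by omega)]
      exact gaussKernel_div_le_of_distant_right hh.le hσ hκ (hm k) (hm n) (by nlinarith)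
        (by linarith [hx.2])

theorem sum_cellRatioBound_le (i : Fin N) :
    ∑ n ∈ Finset.univ.erase i, cellRatioBound κ n i ≤
      2 * exp (-(κ / 90)) + N * exp (-(5 * κ / 9)) := by
  classical
  have hadj : (Finset.univ.filter fun n : Fin N => (n : ℕ) = i + 1 ∨ (i : ℕ) = n + 1).card ≤ 2 := by
    rw [Finset.filter_or]
    refine (Finset.card_union_le _ _).trans (Nat.add_le_add (b := 1) (d := 1) ?_ ?_) <;>
      exact Finset.card_le_one.2 fun p hp q hq => Fin.ext (by simp at hp hq; omega)
  set adj := Finset.univ.filter fun n : Fin N => (n : ℕ) = i + 1 ∨ (i : ℕ) = n + 1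
  have hterm : ∀ n : Fin N, cellRatioBound κ n i ≤
      (if n ∈ adj then exp (-(κ / 90)) else 0) + exp (-(5 * κ / 9)) := by
    intro n
    unfold cellRatioBound
    by_cases hn : n ∈ adj
    · rw [if_pos hn, if_pos (by simpa [adj] using hn)]
      linarith [exp_pos (-(5 * κ / 9))]
    · rw [if_neg hn, if_neg (by simpa [adj] using hn), zero_add]
  calc ∑ n ∈ Finset.univ.erase i, cellRatioBound κ n i
      ≤ ∑ n, ((if n ∈ adj then exp (-(κ / 90)) else 0) + exp (-(5 * κ / 9))) :=
        Finset.sum_le_univ_sum_of_nonneg (fun n => by unfold cellRatioBound; positivity) |>.trans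
          (Finset.sum_le_sum fun n _ => hterm n)
    _ = adj.card * exp (-(κ / 90)) + N * exp (-(5 * κ / 9)) := by
        rw [Finset.sum_add_distrib, Finset.sum_ite_mem, Finset.univ_inter]
        simp
    _ ≤ 2 * exp (-(κ / 90)) + N * exp (-(5 * κ / 9)) := by
        gcongr; exact_mod_cast hadj

theorem one_sub_softmaxWeight_le (hh : 0 < h) (hσ : 0 < σ2) (hκ : σ2 * κ ≤ h ^ 2)
    (hm : ∀ n, |m n - (a + n * h + h / 2)| ≤ h / 6) {i : Fin N} (hx : x ∈ gridCell a h i)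
    (hxS : x ∉ cellBoundaryStrip a h i) :
    1 - softmaxWeight σ2 m i x ≤ 2 * exp (-(κ / 90)) + N * exp (-(5 * κ / 9)) := by
  classical
  have hin : x ∈ Icc (a + i * h + 11 * h / 60) (a + i * h + h - 11 * h / 60) := by
    constructor <;> by_contra! hc
    · exact hxS (Or.inl ⟨by linarith [hx.1], hc.le⟩)
    · exact hxS (Or.inr ⟨hc.le, by linarith [hx.2]⟩)
  calc 1 - softmaxWeight σ2 m i x
      ≤ ∑ n ∈ Finset.univ.erase i, gaussKernel σ2 (m n) x / gaussKernel σ2 (m i) x :=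
        one_sub_div_sum_le (fun k => gaussKernel_pos σ2 (m k) x) i
    _ ≤ ∑ n ∈ Finset.univ.erase i, cellRatioBound κ n i :=
        Finset.sum_le_sum fun n hn => gaussKernel_div_le_cellRatioBound hh hσ hκ hm
          (Finset.ne_of_mem_erase hn) ⟨by linarith [hin.1], by linarith [hin.2]⟩
          (fun _ => hin.1) (fun _ => hin.2)
    _ ≤ 2 * exp (-(κ / 90)) + N * exp (-(5 * κ / 9)) := sum_cellRatioBound_le i

theorem softmaxWeight_le_cellRatioBound (hh : 0 < h) (hσ : 0 < σ2) (hκ : σ2 * κ ≤ h ^ 2)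
    (hm : ∀ n, |m n - (a + n * h + h / 2)| ≤ h / 6) {i k : Fin N} (hki : k ≠ i)
    (hx : x ∈ gridCell a h k) (hxS : x ∉ cellBoundaryStrip a h i) :
    softmaxWeight σ2 m i x ≤ cellRatioBound κ i k := by
  refine (div_sum_le_div (fun n => gaussKernel_pos σ2 (m n) x) i k).trans
    (gaussKernel_div_le_cellRatioBound hh hσ hκ hm hki.symm ⟨hx.1.le, hx.2⟩ ?_ ?_)
  · intro hadj
    have hcast : (k : ℝ) * h = i * h + h := by rw [hadj]; push_cast; ring
    by_contra! hc
    exact hxS (Or.inr ⟨by linarith [hx.1], by linarith⟩)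
  · intro hadj
    have hcast : (i : ℝ) * h = k * h + h := by rw [hadj]; push_cast; ring
    by_contra! hc
    exact hxS (Or.inl ⟨by linarith, by linarith [hx.2]⟩)

theorem cellRatioBound_le_indicator (hh : 0 ≤ h) {i k : ℕ} (hx : x ∈ gridCell a h k) :
    cellRatioBound κ i k ≤
      (gridCellNbhd a h i).indicator (fun _ => 2 * exp (-(κ / 90)) + N * exp (-(5 * κ / 9))) x +
        exp (-(5 * κ / 9)) := by
  have he1 := exp_pos (-(κ / 90))
  have he2 := exp_pos (-(5 * κ / 9))
  rw [cellRatioBound]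
  split_ifs with hadj
  · have hxU : x ∈ gridCellNbhd a h i := by
      rcases hadj with hadj | hadj
      · have hcast : (i : ℝ) * h = k * h + h := by rw [hadj]; push_cast; ring
        exact ⟨by linarith [hx.1], by linarith [hx.2]⟩
      · have hcast : (k : ℝ) * h = i * h + h := by rw [hadj]; push_cast; ring
        exact ⟨by linarith [hx.1], by linarith [hx.2]⟩
    rw [indicator_of_mem hxU]
    nlinarith [mul_nonneg (Nat.cast_nonneg (α := ℝ) N) he2.le]
  · exact le_add_of_nonneg_left (indicator_nonneg (fun _ _ => by positivity) x)

theorem abs_softmaxWeight_sub_indicator_le (hh : 0 < h) (hσ : 0 < σ2) (hκ : σ2 * κ ≤ h ^ 2)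
    (hm : ∀ n, |m n - (a + n * h + h / 2)| ≤ h / 6) (i : Fin N) (hx : x ∈ Ioc a (a + N * h)) :
    |softmaxWeight σ2 m i x - (gridCell a h i).indicator (fun _ => 1) x| ≤
      (cellBoundaryStrip a h i).indicator (fun _ => 1) x +
        (gridCellNbhd a h i).indicator
          (fun _ => 2 * exp (-(κ / 90)) + N * exp (-(5 * κ / 9))) x +
        exp (-(5 * κ / 9)) := by
  have hw0 : 0 ≤ softmaxWeight σ2 m i x := div_sum_nonneg (fun k => gaussKernel_pos σ2 (m k) x) i
  have hw1 : softmaxWeight σ2 m i x ≤ 1 := div_sum_le_one (fun k => gaussKernel_pos σ2 (m k) x) i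
  have hU0 : 0 ≤ (gridCellNbhd a h i).indicator
      (fun _ => 2 * exp (-(κ / 90)) + N * exp (-(5 * κ / 9))) x :=
    indicator_nonneg (fun _ _ => by positivity) x
  have he2 := exp_pos (-(5 * κ / 9))
  by_cases hxS : x ∈ cellBoundaryStrip a h i
  · rw [indicator_of_mem hxS]
    linarith [abs_sub_le_of_nonneg_of_le hw0 hw1
      (indicator_nonneg (s := gridCell a h i) (fun _ _ => zero_le_one) x)
      (indicator_le_self' (s := gridCell a h i) (fun _ _ => zero_le_one) x)]
  rw [indicator_of_notMem hxS, zero_add]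
  obtain ⟨k, hk⟩ := exists_mem_gridCell hh hx
  by_cases hki : k = i
  · subst hki
    have hxU : x ∈ gridCellNbhd a h k := ⟨by linarith [hk.1], by linarith [hk.2]⟩
    rw [indicator_of_mem hk, indicator_of_mem hxU, abs_of_nonpos (by linarith)]
    linarith [one_sub_softmaxWeight_le hh hσ hκ hm hk hxS]
  · have hxi : x ∉ gridCell a h i := fun hi => hki (Fin.ext (eq_of_mem_gridCell hh hk hi))
    rw [indicator_of_notMem hxi, sub_zero, abs_of_nonneg hw0]
    exact (softmaxWeight_le_cellRatioBound hh hσ hκ hm hki hk hxS).trans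
      (cellRatioBound_le_indicator hh.le hk)

end Grid

theorem setIntegral_indicator_const_le {α : Type*} [MeasurableSpace α] {μ : Measure α}
    {s t : Set α} (hs : MeasurableSet s) (hμs : μ s ≠ ⊤) {c : ℝ} (hc : 0 ≤ c) :
    ∫ x in t, s.indicator (fun _ => c) x ∂μ ≤ μ.real s * c := by
  rw [integral_indicator_const c hs, smul_eq_mul, measureReal_restrict_apply hs]
  exact mul_le_mul_of_nonneg_right (measureReal_mono inter_subset_left hμs) hc

theorem volume_real_cellBoundaryStrip_le (a h : ℝ) (i : ℕ) (hh : 0 ≤ h) :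
    volume.real (cellBoundaryStrip a h i) ≤ 11 * h / 15 := by
  refine (measureReal_union_le _ _).trans ?_
  rw [Real.volume_real_Icc_of_le (by linarith), Real.volume_real_Icc_of_le (by linarith)]
  linarith

theorem volume_real_gridCellNbhd (a h : ℝ) (i : ℕ) (hh : 0 ≤ h) :
    volume.real (gridCellNbhd a h i) = 3 * h := by
  rw [gridCellNbhd, Real.volume_real_Ioc_of_le (by linarith)]
  ring

theorem integral_abs_softmaxWeight_sub_indicator_le {N : ℕ} {a h σ2 κ : ℝ} {m : Fin N → ℝ}
    (hh : 0 < h) (hσ : 0 < σ2) (hκ : σ2 * κ ≤ h ^ 2)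
    (hm : ∀ n, |m n - (a + n * h + h / 2)| ≤ h / 6) (i : Fin N) :
    ∫ x in Ioc a (a + N * h), |softmaxWeight σ2 m i x - (gridCell a h i).indicator (fun _ => 1) x|
      ≤ 11 * h / 15 + 3 * h * (2 * exp (-(κ / 90)) + N * exp (-(5 * κ / 9))) +
        N * h * exp (-(5 * κ / 9)) := by
  set B := 2 * exp (-(κ / 90)) + N * exp (-(5 * κ / 9))
  set S := cellBoundaryStrip a h i
  set U := gridCellNbhd a h i
  have hSmeas : MeasurableSet S := measurableSet_Icc.union measurableSet_Icc
  have hB : 0 ≤ B := by positivity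
  have hS : volume S ≠ ⊤ := (measure_union_le _ _).trans_lt (by simp) |>.ne
  have hI : volume (Ioc a (a + N * h)) ≠ ⊤ := measure_Ioc_lt_top.ne
  have hSint : IntegrableOn (S.indicator fun _ => (1 : ℝ)) (Ioc a (a + N * h)) :=
    (integrableOn_const hI).indicator hSmeas
  have hUint : IntegrableOn (U.indicator fun _ => B) (Ioc a (a + N * h)) :=
    (integrableOn_const hI).indicator measurableSet_Ioc
  calc _ ≤ ∫ x in Ioc a (a + N * h),
          (S.indicator (fun _ => 1) x + U.indicator (fun _ => B) x + exp (-(5 * κ / 9))) := by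
        refine integral_mono_of_nonneg (ae_of_all _ fun x => abs_nonneg _) ?_
          ((ae_restrict_iff' measurableSet_Ioc).2 (ae_of_all _ fun x hx =>
            abs_softmaxWeight_sub_indicator_le hh hσ hκ hm i hx))
        exact (hSint.add hUint).add (integrableOn_const hI)
    _ = (∫ x in Ioc a (a + N * h), S.indicator (fun _ => 1) x) +
          (∫ x in Ioc a (a + N * h), U.indicator (fun _ => B) x) +
          ∫ _ in Ioc a (a + N * h), exp (-(5 * κ / 9)) := by
        rw [integral_add (f := fun x => S.indicator (fun _ => 1) x + U.indicator (fun _ => B) x)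
          (hSint.add hUint) (integrableOn_const hI), integral_add hSint hUint]
    _ ≤ volume.real S * 1 + volume.real U * B + N * h * exp (-(5 * κ / 9)) := by
        gcongr
        · exact setIntegral_indicator_const_le hSmeas hS zero_le_one
        · exact setIntegral_indicator_const_le measurableSet_Ioc measure_Ioc_lt_top.ne hB
        · rw [setIntegral_const,
            Real.volume_real_Ioc_of_le (le_add_of_nonneg_right (by positivity)),
            smul_eq_mul, add_sub_cancel_left]
    _ ≤ _ := by
        rw [volume_real_gridCellNbhd a h i hh.le]
        nlinarith [volume_real_cellBoundaryStrip_le a h i hh.le]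

/-- `κ ≥ 10000` gives `exp (-(κ/90)) ≤ 1/112` through `exp y ≥ 1 + y`; the estimate needs
`exp (-(κ/90)) < 1/102`. -/
theorem grid_error_bound_lt {N h u κ : ℝ} (hu : 0 < u)
    (hhu : h ≤ 5 * u / 4) (hNh : N * h ≤ exp (κ / 30) * (u / 4)) (hκ : 10000 ≤ κ) :
    11 * h / 15 + 3 * h * (2 * exp (-(κ / 90)) + N * exp (-(5 * κ / 9))) +
      N * h * exp (-(5 * κ / 9)) < u := by
  have he1 : exp (-(κ / 90)) ≤ 1 / 112 := by
    rw [exp_neg, inv_le_comm₀ (exp_pos _) (by norm_num)]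
    linarith [add_one_le_exp (κ / 90)]
  set e1 := exp (-(κ / 90))
  have he2 : exp (κ / 30) * exp (-(5 * κ / 9)) ≤ e1 := by
    rw [← exp_add, exp_le_exp]; linarith
  have hNe2 : N * h * exp (-(5 * κ / 9)) ≤ u / 4 * e1 := by
    calc N * h * exp (-(5 * κ / 9)) ≤ exp (κ / 30) * (u / 4) * exp (-(5 * κ / 9)) := by gcongr
      _ ≤ u / 4 * e1 := by nlinarith
  have he1u : h * e1 ≤ 5 * u / 4 * (1 / 112) := by gcongr
  nlinarith

section DoubleIndex

variable {a b : ℝ} {K K' : ℕ}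

theorem gPi_eq_softmaxWeight (μ : Fin K → Fin K' → ℝ) (σ2 : ℝ) (j : Fin K) (l : Fin K') (x : ℝ) :
    gPi a b K K' μ σ2 j l x =
      softmaxWeight σ2 (Function.uncurry μ ∘ finProdFinEquiv.symm) (finProdFinEquiv (j, l)) x := by
  rw [gPi, softmaxWeight, ← Fintype.sum_prod_type', ← finProdFinEquiv.sum_comp]
  simp only [gaussKernel, Function.comp_apply, Equiv.symm_apply_apply, Function.uncurry_apply_pair]
  rfl

theorem gA_eq_add_mul (hK' : 0 < K') (j : Fin K) (l : Fin K') :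
    gA a b K K' j l = a + (finProdFinEquiv (j, l) : ℕ) * (gL a b K / K') := by
  have : (K' : ℝ) ≠ 0 := by positivity
  rw [gA, finProdFinEquiv_apply_val]
  push_cast
  field_simp
  ring

theorem abs_sub_gridCentre_le (hK' : 0 < K') {μ : Fin K → Fin K' → ℝ}
    (hμ : ∀ j l, |μ j l - gC a b K K' j l| ≤ gL a b K / (6 * K')) (n : Fin (K * K')) :
    |(Function.uncurry μ ∘ finProdFinEquiv.symm) n -
        (a + n * (gL a b K / K') + gL a b K / K' / 2)| ≤ gL a b K / K' / 6 := by
  obtain ⟨⟨j, l⟩, rfl⟩ := finProdFinEquiv.surjective n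
  have hc : gC a b K K' j l = a + (finProdFinEquiv (j, l) : ℕ) * (gL a b K / K') +
      gL a b K / K' / 2 := by
    rw [gC, gA_eq_add_mul hK' j l]; ring
  simpa only [Function.comp_apply, Equiv.symm_apply_apply, Function.uncurry_apply_pair, hc,
    div_div, mul_comm (K' : ℝ)] using hμ j l

theorem add_natCast_mul_gL_div (hK : 0 < K) (hK' : 0 < K') :
    a + ((K * K' : ℕ) : ℝ) * (gL a b K / K') = b := by
  have : (K : ℝ) ≠ 0 := by positivity
  have : (K' : ℝ) ≠ 0 := by positivity
  rw [gL]; push_cast; field_simp; ring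

theorem gL_div_le (hK' : 0 < K') {M ε : ℝ} (hM : 0 < M) (hε : 0 < ε)
    (hK'_ge : 12 * gL a b K * M / (5 * ε) ≤ K') :
    gL a b K / K' ≤ 5 * (ε / (3 * M)) / 4 := by
  have : (0 : ℝ) < K' := by positivity
  rw [div_le_iff₀ (by positivity)] at hK'_ge
  rw [div_le_iff₀ this]
  field_simp
  linarith

theorem natCast_mul_gL_div_le (hab : a < b) (hK : 0 < K) (hK' : 0 < K') {M ε : ℝ} (hM : 0 < M)
    (hε : 0 < ε) (hK'_ge : 30 * log (12 * gL a b K * M * K / ε) ≤ K') :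
    ((K * K' : ℕ) : ℝ) * (gL a b K / K') ≤ exp (K' / 30) * (ε / (3 * M) / 4) := by
  have hL : 0 < gL a b K := div_pos (sub_pos.2 hab) (by positivity)
  have hexp : 12 * gL a b K * M * K / ε ≤ exp (K' / 30) :=
    (log_le_iff_le_exp (by positivity)).1 (by linarith)
  rw [div_le_iff₀ hε] at hexp
  have : (K' : ℝ) ≠ 0 := by positivity
  push_cast
  field_simp
  linarith

end DoubleIndex

theorem stmt9 :
    ∃ K₀ : ℕ, ∀ (a b : ℝ), a < b → ∀ (K K' : ℕ), 0 < K → 0 < K' →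
      ∀ (M ε : ℝ), 0 < M → 0 < ε →
      max (max (12 * gL a b K * M / (5 * ε))
            (30 * Real.log (12 * gL a b K * M * K / ε))) (K₀ : ℝ) ≤ (K' : ℝ) →
      ∀ (μ : Fin K → Fin K' → ℝ),
        (∀ j l, |μ j l - gC a b K K' j l| ≤ gL a b K / (6 * K')) →
      ∀ σ2 : ℝ, gL a b K ^ 2 / (2 * (K' : ℝ) ^ 3) ≤ σ2 →
        σ2 ≤ gL a b K ^ 2 / (K' : ℝ) ^ 3 →
      ∀ (j : Fin K) (l : Fin K'),
        (∫ x in Set.Ioc a b,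
          |gPi a b K K' μ σ2 j l x -
            Set.indicator (Set.Ioc (gA a b K K' j l) (gA a b K K' j l + gL a b K / K'))
              (fun _ => (1 : ℝ)) x|)
          < ε / (3 * M) := by
  refine ⟨10000, fun a b hab K K' hK hK' M ε hM hε hK'_ge μ hμ σ2 hσ2_ge hσ2_le j l => ?_⟩
  obtain ⟨⟨hK'_width, hK'_log⟩, hK'_large⟩ := max_le_iff.1 hK'_ge |>.imp_left max_le_iff.1
  have hL : 0 < gL a b K := div_pos (sub_pos.2 hab) (Nat.cast_pos.2 hK)
  have hK'pos : (0 : ℝ) < K' := Nat.cast_pos.2 hK'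
  have hh : 0 < gL a b K / K' := div_pos hL hK'pos
  have hσ : 0 < σ2 := lt_of_lt_of_le (by positivity) hσ2_ge
  have hκ : σ2 * K' ≤ (gL a b K / K') ^ 2 := by
    calc σ2 * K' ≤ gL a b K ^ 2 / (K' : ℝ) ^ 3 * K' := by gcongr
      _ = (gL a b K / K') ^ 2 := by field_simp
  have hbound := integral_abs_softmaxWeight_sub_indicator_le hh hσ hκ
    (abs_sub_gridCentre_le hK' hμ) (finProdFinEquiv (j, l))
  rw [add_natCast_mul_gL_div hK hK'] at hbound
  simp only [gPi_eq_softmaxWeight, gA_eq_add_mul hK' j l]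
  exact hbound.trans_lt (grid_error_bound_lt (by positivity) (gL_div_le hK' hM hε hK'_width)
    (natCast_mul_gL_div_le hab hK hK' hM hε hK'_log) (by exact_mod_cast hK'_large))
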